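/- The bivariate generating polynomial D_n(q,t) = sum over Dyck paths p of order n of q^(area(p)) * t^(rk(p)) satisfies the recurrence D_n(q,t) = sum_{k=0}^{n-1} (qt)^k * D_k(q, 1/t) * D_{n-1-k}(q,t) for n ≥ 1, with D_0(q,t) = 1. -/

import Mathlib

open Finset

/-- Number of up steps (`true`) among the first `k` steps of `p`. -/
def upCount {m : ℕ} (p : Fin m → Bool) (k : ℕ) : ℕ :=
  (Finset.univ.filter fun i : Fin m => (i : ℕ) < k ∧ p i = true).card

/-- Number of down steps (`false`) among the first `k` steps of `p`. -/
def downCount {m : ℕ} (p : Fin m → Bool) (k : ℕ) : ℕ :=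
  (Finset.univ.filter fun i : Fin m => (i : ℕ) < k ∧ p i = false).card

/-- `p` is a Dyck path of order `n`: a path of `2n` steps (up = `true`,
down = `false`), with `n` up steps, never going below the x-axis. -/
def IsDyck (n : ℕ) (p : Fin (2 * n) → Bool) : Prop :=
  upCount p (2 * n) = n ∧ ∀ k < 2 * n + 1, downCount p k ≤ upCount p k

instance (n : ℕ) : DecidablePred (IsDyck n) := fun p => by
  unfold IsDyck; infer_instance

/-- The Finset of Dyck paths of order `n`. -/
def dyckSet (n : ℕ) : Finset (Fin (2 * n) → Bool) :=
  Finset.univ.filter (IsDyck n)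

/-- Height of the path after `k` steps. -/
def height {n : ℕ} (p : Fin (2 * n) → Bool) (k : ℕ) : ℕ :=
  upCount p k - downCount p k

/-- The area of a Dyck path: the number of unused lattice points strictly below
the path and weakly above the x-axis (equivalently, the number of
`1/√2 × 1/√2` diamonds fitting between the path and the x-axis). -/
def area {n : ℕ} (p : Fin (2 * n) → Bool) : ℕ :=
  ∑ k ∈ Finset.range (2 * n + 1), height p k / 2

/-- The `j`-th step of `p` (defaulting to `false` out of range). -/
def stepAt {m : ℕ} (p : Fin m → Bool) (j : ℕ) : Bool :=
  if h : j < m then p ⟨j, h⟩ else false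

/-- The rank of a Dyck path of order `n` in the noncrossing partition lattice
under Stump's bijection: equivalently (Simion–Ullman) the number of letters `b`
and `r` in its SU-word, i.e. the number of `i ∈ {1,…,n-1}` for which the step
leaving the `i`-th odd lattice point (the step with index `2i-1`, 0-indexed)
is an up step. -/
def rk {n : ℕ} (p : Fin (2 * n) → Bool) : ℕ :=
  ((Finset.Icc 1 (n - 1)).filter fun i => stepAt p (2 * i - 1) = true).card

/-!
A nonempty Dyck path `p` of order `n` factors uniquely at its first return to the axis as
`U p₁ D p₂`, with `p₁` of order `k < n` and `p₂` of order `n - 1 - k`. Lifting `p₁` one unit up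
adds `k` to its area, so `area p = k + area p₁ + area p₂`. The lift also shifts `p₁` by one step,
so the odd-position steps of `U p₁ D` counted by `rk` are the even-position steps of `p₁`; since
`p₁` has `k` up steps in all, `rk p = k - rk p₁ + rk p₂`. Hence the weight of `p` is
`(qt)^k · q^(area p₁) t^(-rk p₁) · q^(area p₂) t^(rk p₂)`.

Paths are handled as step sequences `ℕ → Bool` (through `stepAt`), on which concatenation is easy.
-/

namespace DyckSeq

variable {b : Bool} {f f' g g' : ℕ → Bool} {j k k' l m n : ℕ}

lemma count_congr {p q : ℕ → Prop} [DecidablePred p] [DecidablePred q]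
    (h : ∀ j < m, p j ↔ q j) : Nat.count p m = Nat.count q m := by
  simp only [Nat.count_eq_card_filter_range]
  exact congrArg card (filter_congr fun j hj => h j (mem_range.1 hj))

def stepCount (b : Bool) (f : ℕ → Bool) (m : ℕ) : ℕ := Nat.count (f · = b) m

@[simp] lemma stepCount_zero : stepCount b f 0 = 0 := Nat.count_zero _

lemma stepCount_succ : stepCount b f (m + 1) = stepCount b f m + if f m = b then 1 else 0 :=
  Nat.count_succ _ _

lemma stepCount_add :
    stepCount b f (m + l) = stepCount b f m + stepCount b (fun j => f (m + j)) l :=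
  Nat.count_add _ _ _

lemma stepCount_congr (h : ∀ j < m, f j = f' j) : stepCount b f m = stepCount b f' m :=
  count_congr fun j hj => by rw [h j hj]

lemma stepCount_true_add_false (f : ℕ → Bool) (m : ℕ) :
    stepCount true f m + stepCount false f m = m := by
  induction m with
  | zero => simp
  | succ m ih =>
    rw [stepCount_succ, stepCount_succ]
    cases f m <;> simp <;> omega

def IsDyckSeq (n : ℕ) (f : ℕ → Bool) : Prop :=
  stepCount true f (2 * n) = n ∧ ∀ m ≤ 2 * n, stepCount false f m ≤ stepCount true f m

lemma IsDyckSeq.congr (hf : IsDyckSeq n f) (h : ∀ j < 2 * n, f j = f' j) : IsDyckSeq n f' := by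
  refine ⟨(stepCount_congr h).symm.trans hf.1, fun m hm => ?_⟩
  have h' : ∀ j < m, f j = f' j := fun j hj => h j (by omega)
  rw [← stepCount_congr h', ← stepCount_congr h']
  exact hf.2 m hm

lemma IsDyckSeq.stepCount_false (hf : IsDyckSeq n f) : stepCount false f (2 * n) = n := by
  have := stepCount_true_add_false f (2 * n)
  have := hf.1
  omega

lemma IsDyckSeq.last_eq_false (hf : IsDyckSeq n f) (hn : 0 < n) : f (2 * n - 1) = false := by
  have hu := hf.1
  have hd := hf.stepCount_false
  have hle := hf.2 (2 * n - 1) (by omega)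
  rw [show 2 * n = 2 * n - 1 + 1 by omega, stepCount_succ] at hu hd
  cases h : f (2 * n - 1)
  · rfl
  · simp only [h, if_true, if_false, Bool.true_eq_false] at hu hd
    omega

/-- `f` returns to the axis for the first time after `2 * k + 2` steps. -/
def FirstReturnAt (k : ℕ) (f : ℕ → Bool) : Prop :=
  stepCount true f (2 * k + 2) = stepCount false f (2 * k + 2) ∧
    ∀ m ≤ 2 * k, stepCount false f (m + 1) < stepCount true f (m + 1)

lemma FirstReturnAt.unique (h : FirstReturnAt k f) (h' : FirstReturnAt k' f) : k = k' := by
  have le : ∀ a a', FirstReturnAt a f → FirstReturnAt a' f → a ≤ a' := fun a a' ha ha' => by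
    by_contra! hlt
    have := ha.2 (2 * a' + 1) (by omega)
    rw [show 2 * a' + 1 + 1 = 2 * a' + 2 from rfl, ha'.1] at this
    exact lt_irrefl _ this
  exact le_antisymm (le _ _ h h') (le _ _ h' h)

lemma IsDyckSeq.exists_firstReturnAt (hf : IsDyckSeq n f) (hn : 0 < n) :
    ∃ k < n, FirstReturnAt k f := by
  classical
  have hex : ∃ r, 0 < r ∧ stepCount true f r = stepCount false f r :=
    ⟨2 * n, by omega, hf.1.trans hf.stepCount_false.symm⟩
  obtain ⟨hr0, hr⟩ := Nat.find_spec hex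
  have hrn : Nat.find hex ≤ 2 * n :=
    Nat.find_min' hex ⟨by omega, hf.1.trans hf.stepCount_false.symm⟩
  have hsum := stepCount_true_add_false f (Nat.find hex)
  refine ⟨Nat.find hex / 2 - 1, by omega, ?_, fun m hm => ?_⟩
  · rwa [show 2 * (Nat.find hex / 2 - 1) + 2 = Nat.find hex by omega]
  · have hne := Nat.find_min hex (m := m + 1) (by omega)
    exact lt_of_le_of_ne (hf.2 (m + 1) (by omega)) fun h => hne ⟨by omega, h.symm⟩

/-- The sequence `U f D g`, where `f` is read as a path of order `k`. -/
def nestAppend (k : ℕ) (f g : ℕ → Bool) : ℕ → Bool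
  | 0 => true
  | j + 1 => if j < 2 * k then f j else if j = 2 * k then false else g (j - (2 * k + 1))

@[simp] lemma nestAppend_zero : nestAppend k f g 0 = true := rfl

lemma nestAppend_succ_of_lt (hj : j < 2 * k) : nestAppend k f g (j + 1) = f j := if_pos hj

@[simp] lemma nestAppend_two_mul_add_one : nestAppend k f g (2 * k + 1) = false := by
  simp [nestAppend]

@[simp] lemma nestAppend_add (j : ℕ) : nestAppend k f g (2 * k + 2 + j) = g j := by
  simp only [nestAppend, show 2 * k + 2 + j = 2 * k + 1 + j + 1 by omega]
  rw [if_neg (by omega), if_neg (by omega), show 2 * k + 1 + j - (2 * k + 1) = j by omega]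

lemma nestAppend_congr (hf : ∀ j < 2 * k, f j = f' j) (hg : ∀ j < l, g j = g' j)
    (hj : j < 2 * k + 2 + l) : nestAppend k f g j = nestAppend k f' g' j := by
  rcases j with _ | j
  · rfl
  simp only [nestAppend]
  split_ifs with h
  · exact hf j h
  · rfl
  · exact hg _ (by omega)

lemma stepCount_nestAppend_succ (hm : m ≤ 2 * k) :
    stepCount b (nestAppend k f g) (m + 1) = b.toNat + stepCount b f m := by
  have hshift : stepCount b (fun j => nestAppend k f g (1 + j)) m = stepCount b f m :=
    stepCount_congr fun j hj => by rw [Nat.add_comm]; exact nestAppend_succ_of_lt (by omega)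
  rw [Nat.add_comm m 1, stepCount_add, hshift]
  cases b <;> simp [stepCount, Nat.count_one]

/-- `U` and `D` together contribute one step of each kind, so the formula is the same for both
letters. -/
lemma stepCount_nestAppend_add :
    stepCount b (nestAppend k f g) (2 * k + 2 + m) =
      stepCount b f (2 * k) + 1 + stepCount b g m := by
  rw [stepCount_add, stepCount_succ, stepCount_nestAppend_succ le_rfl]
  simp only [nestAppend_two_mul_add_one, nestAppend_add]
  cases b <;> simp [Nat.add_comm 1]

lemma IsDyckSeq.firstReturnAt_nestAppend (hf : IsDyckSeq k f) :
    FirstReturnAt k (nestAppend k f g) := by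
  refine ⟨?_, fun m hm => ?_⟩
  · rw [← add_zero (2 * k + 2), stepCount_nestAppend_add, stepCount_nestAppend_add, hf.1,
      hf.stepCount_false, stepCount_zero, stepCount_zero]
  · rw [stepCount_nestAppend_succ hm, stepCount_nestAppend_succ hm]
    have := hf.2 m hm
    simp only [Bool.toNat_false, Bool.toNat_true]
    omega

theorem isDyckSeq_nestAppend (hf : IsDyckSeq k f) (hg : IsDyckSeq l g) :
    IsDyckSeq (k + l + 1) (nestAppend k f g) := by
  refine ⟨?_, fun m hm => ?_⟩
  · rw [show 2 * (k + l + 1) = 2 * k + 2 + 2 * l by ring, stepCount_nestAppend_add, hf.1, hg.1]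
    ring
  rcases m with _ | m
  · simp
  by_cases hmk : m ≤ 2 * k
  · exact ((hf.firstReturnAt_nestAppend (g := g)).2 m hmk).le
  obtain ⟨m, hm'⟩ : ∃ m', m + 1 = 2 * k + 2 + m' := ⟨m + 1 - (2 * k + 2), by omega⟩
  rw [hm', stepCount_nestAppend_add, stepCount_nestAppend_add, hf.1, hf.stepCount_false]
  have := hg.2 m (by omega)
  omega

lemma isDyckSeq_of_nestAppend (h : IsDyckSeq (k + l + 1) (nestAppend k f g))
    (hr : FirstReturnAt k (nestAppend k f g)) : IsDyckSeq k f ∧ IsDyckSeq l g := by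
  obtain ⟨hret, hpos⟩ := hr
  have hfk : stepCount true f (2 * k) = k ∧ stepCount false f (2 * k) = k := by
    have := stepCount_true_add_false f (2 * k)
    rw [← add_zero (2 * k + 2), stepCount_nestAppend_add, stepCount_nestAppend_add] at hret
    simp only [stepCount_zero] at hret
    omega
  refine ⟨⟨hfk.1, fun m hm => ?_⟩, ⟨?_, fun m hm => ?_⟩⟩
  · have := hpos m hm
    rw [stepCount_nestAppend_succ hm, stepCount_nestAppend_succ hm] at this
    simp only [Bool.toNat_false, Bool.toNat_true] at this
    omega
  · have := h.1
    rw [show 2 * (k + l + 1) = 2 * k + 2 + 2 * l by ring, stepCount_nestAppend_add, hfk.1] at this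
    omega
  · have := h.2 (2 * k + 2 + m) (by omega)
    rw [stepCount_nestAppend_add, stepCount_nestAppend_add, hfk.1, hfk.2] at this
    omega

lemma FirstReturnAt.eq_nestAppend (hr : FirstReturnAt k f) :
    f = nestAppend k (fun j => f (j + 1)) (fun j => f (2 * k + 2 + j)) := by
  obtain ⟨hret, hpos⟩ := hr
  have h0 : f 0 = true := by
    have := hpos 0 (by omega)
    simp only [stepCount_succ, stepCount_zero] at this
    cases h : f 0 <;> simp_all
  have hk : f (2 * k + 1) = false := by
    have := hpos (2 * k) le_rfl
    rw [show 2 * k + 2 = 2 * k + 1 + 1 from rfl] at hret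
    simp only [stepCount_succ (m := 2 * k + 1)] at hret
    cases h : f (2 * k + 1)
    · rfl
    · simp [h] at hret
      omega
  funext j
  rcases j with _ | j
  · exact h0
  simp only [nestAppend]
  split_ifs with h1 h2
  · rfl
  · rw [h2, hk]
  · congr 1
    omega

theorem IsDyckSeq.exists_eq_nestAppend (hf : IsDyckSeq n f) (hn : 0 < n) :
    ∃ k < n, ∃ f₁ g₁, IsDyckSeq k f₁ ∧ IsDyckSeq (n - 1 - k) g₁ ∧ f = nestAppend k f₁ g₁ := by
  obtain ⟨k, hkn, hr⟩ := hf.exists_firstReturnAt hn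
  have hfeq := hr.eq_nestAppend
  rw [hfeq] at hf hr
  rw [show n = k + (n - 1 - k) + 1 by omega] at hf
  obtain ⟨hf₁, hg₁⟩ := isDyckSeq_of_nestAppend hf hr
  exact ⟨k, hkn, _, _, hf₁, hg₁, hfeq⟩

theorem IsDyckSeq.nestAppend_inj (hf : IsDyckSeq k f) (hf' : IsDyckSeq k' f')
    (h : nestAppend k f g = nestAppend k' f' g') :
    k = k' ∧ (∀ j < 2 * k, f j = f' j) ∧ g = g' := by
  obtain rfl := hf.firstReturnAt_nestAppend.unique (h ▸ hf'.firstReturnAt_nestAppend)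
  refine ⟨rfl, fun j hj => ?_, funext fun j => ?_⟩
  · simpa only [nestAppend_succ_of_lt hj] using congrFun h (j + 1)
  · simpa only [nestAppend_add] using congrFun h (2 * k + 2 + j)

def seqArea (n : ℕ) (f : ℕ → Bool) : ℕ :=
  ∑ m ∈ range (2 * n + 1), (stepCount true f m - stepCount false f m) / 2

lemma sum_range_two_mul_add_one_div_two (n : ℕ) : ∑ m ∈ range (2 * n + 1), m / 2 = n * n := by
  induction n with
  | zero => simp
  | succ n ih =>
    rw [show 2 * (n + 1) + 1 = 2 * n + 1 + 1 + 1 by ring, sum_range_succ, sum_range_succ, ih,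
      show (2 * n + 1) / 2 = n by omega, show (2 * n + 1 + 1) / 2 = n + 1 by omega]
    ring

/-- The height after `m` steps is `m - 2 * stepCount false f m`, so half of it is
`m / 2 - stepCount false f m`. -/
lemma IsDyckSeq.seqArea_add_sum_stepCount_false (hf : IsDyckSeq n f) :
    seqArea n f + ∑ m ∈ range (2 * n + 1), stepCount false f m = n * n := by
  rw [seqArea, ← sum_add_distrib, ← sum_range_two_mul_add_one_div_two n]
  refine sum_congr rfl fun m hm => ?_
  have := hf.2 m (by simp at hm; omega)
  have := stepCount_true_add_false f m
  omega

lemma IsDyckSeq.sum_stepCount_false_nestAppend (hf : IsDyckSeq k f) :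
    ∑ m ∈ range (2 * (k + l + 1) + 1), stepCount false (nestAppend k f g) m =
      ∑ m ∈ range (2 * k + 1), stepCount false f m +
        ∑ m ∈ range (2 * l + 1), stepCount false g m + (2 * l + 1) * (k + 1) := by
  rw [show 2 * (k + l + 1) + 1 = 1 + (2 * k + 1) + (2 * l + 1) by ring, sum_range_add,
    sum_range_add]
  have hf₁ : ∀ m ∈ range (2 * k + 1),
      stepCount false (nestAppend k f g) (1 + m) = stepCount false f m := fun m hm => by
    rw [Nat.add_comm, stepCount_nestAppend_succ (by simp at hm; omega), Bool.toNat_false,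
      zero_add]
  have hg₁ : ∀ m ∈ range (2 * l + 1),
      stepCount false (nestAppend k f g) (1 + (2 * k + 1) + m) = k + 1 + stepCount false g m :=
    fun m _ => by
      rw [show 1 + (2 * k + 1) + m = 2 * k + 2 + m by ring, stepCount_nestAppend_add,
        hf.stepCount_false]
  rw [sum_congr rfl hf₁, sum_congr rfl hg₁, sum_add_distrib, sum_const, card_range, smul_eq_mul]
  simp only [range_one, sum_singleton, stepCount_zero]
  ring

theorem seqArea_nestAppend (hf : IsDyckSeq k f) (hg : IsDyckSeq l g) :
    seqArea (k + l + 1) (nestAppend k f g) = k + seqArea k f + seqArea l g := by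
  have h := (isDyckSeq_nestAppend hf hg).seqArea_add_sum_stepCount_false
  have hf' := hf.seqArea_add_sum_stepCount_false
  have hg' := hg.seqArea_add_sum_stepCount_false
  rw [hf.sum_stepCount_false_nestAppend] at h
  zify at h hf' hg' ⊢
  linear_combination h - hf' - hg'

def seqRank (n : ℕ) (f : ℕ → Bool) : ℕ := Nat.count (fun j => f (2 * j + 1) = true) n

lemma IsDyckSeq.seqRank_pred (hf : IsDyckSeq n f) : seqRank (n - 1) f = seqRank n f := by
  rcases Nat.eq_zero_or_pos n with rfl | hn
  · rfl
  have hlast := hf.last_eq_false hn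
  rw [show 2 * n - 1 = 2 * (n - 1) + 1 by omega] at hlast
  conv_rhs => rw [show n = n - 1 + 1 by omega, seqRank, Nat.count_succ, hlast]
  simp [seqRank]

lemma count_even_add_seqRank (f : ℕ → Bool) (k : ℕ) :
    Nat.count (fun j => f (2 * j) = true) k + seqRank k f = stepCount true f (2 * k) := by
  induction k with
  | zero => simp [seqRank]
  | succ k ih =>
    rw [seqRank, Nat.count_succ, Nat.count_succ, show 2 * (k + 1) = 2 * k + 1 + 1 by ring,
      stepCount_succ, stepCount_succ, ← ih, seqRank]
    ring

lemma seqRank_nestAppend :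
    seqRank (k + l + 1) (nestAppend k f g) =
      Nat.count (fun j => f (2 * j) = true) k + seqRank l g := by
  rw [seqRank, add_assoc, Nat.count_add, Nat.count_succ']
  congr 1
  · exact count_congr fun j hj => by rw [nestAppend_succ_of_lt (by omega)]
  · simp [show ∀ j, 2 * (k + (j + 1)) + 1 = 2 * k + 2 + (2 * j + 1) by intro j; ring, seqRank]

theorem IsDyckSeq.seqRank_nestAppend_add_seqRank (hf : IsDyckSeq k f) :
    seqRank (k + l + 1) (nestAppend k f g) + seqRank k f = k + seqRank l g := by
  have := count_even_add_seqRank f k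
  rw [seqRank_nestAppend, hf.1] at *
  omega

end DyckSeq

open DyckSeq

section Paths

variable {m n k : ℕ}

lemma stepAt_of_lt (p : Fin m → Bool) {j : ℕ} (hj : j < m) : stepAt p j = p ⟨j, hj⟩ :=
  dif_pos hj

lemma stepAt_of_le (p : Fin m → Bool) {j : ℕ} (hj : m ≤ j) : stepAt p j = false :=
  dif_neg (by omega)

@[simp] lemma stepAt_val (p : Fin m → Bool) (i : Fin m) : stepAt p i = p i := dif_pos i.isLt

lemma card_filter_lt_eq_stepCount (p : Fin m → Bool) (b : Bool) (hk : k ≤ m) :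
    #{i : Fin m | (i : ℕ) < k ∧ p i = b} = stepCount b (stepAt p) k := by
  rw [stepCount, Nat.count_eq_card_filter_range]
  refine card_bij (fun i _ => (i : ℕ)) (fun i hi => ?_) (fun _ _ _ _ h => Fin.ext h)
    fun j hj => ?_
  · simp only [mem_filter, mem_univ, true_and] at hi
    simp [hi.1, hi.2]
  · simp only [mem_filter, mem_range] at hj
    exact ⟨⟨j, by omega⟩, by simp [hj.1, ← hj.2, stepAt_of_lt p (show j < m by omega)]⟩

lemma mem_dyckSet_iff (p : Fin (2 * n) → Bool) : p ∈ dyckSet n ↔ IsDyckSeq n (stepAt p) := by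
  simp only [dyckSet, mem_filter, mem_univ, true_and, IsDyck, IsDyckSeq, upCount, downCount]
  rw [card_filter_lt_eq_stepCount p true le_rfl]
  refine and_congr_right fun _ => ⟨fun h m hm => ?_, fun h m hm => ?_⟩
  · rw [← card_filter_lt_eq_stepCount p _ hm, ← card_filter_lt_eq_stepCount p _ hm]
    exact h m (by omega)
  · rw [card_filter_lt_eq_stepCount p _ (by omega), card_filter_lt_eq_stepCount p _ (by omega)]
    exact h m (by omega)

lemma area_eq_seqArea (p : Fin (2 * n) → Bool) : area p = seqArea n (stepAt p) := by
  refine sum_congr rfl fun m hm => ?_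
  have hm : m ≤ 2 * n := by simp at hm; omega
  simp only [height, upCount, downCount, card_filter_lt_eq_stepCount p _ hm]

lemma rk_eq_seqRank_pred (p : Fin (2 * n) → Bool) : rk p = seqRank (n - 1) (stepAt p) := by
  rw [rk, seqRank, Nat.count_eq_card_filter_range]
  symm
  refine card_bij (fun j _ => j + 1) (fun j hj => ?_) (fun _ _ _ _ h => by omega) fun i hi => ?_
  · simp only [mem_filter, mem_range, mem_Icc] at hj ⊢
    exact ⟨by omega, by rw [show 2 * (j + 1) - 1 = 2 * j + 1 by omega]; exact hj.2⟩
  · simp only [mem_filter, mem_range, mem_Icc] at hi ⊢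
    exact ⟨i - 1, ⟨by omega, by rw [show 2 * (i - 1) + 1 = 2 * i - 1 by omega]; exact hi.2⟩,
      by omega⟩

lemma rk_eq_seqRank {p : Fin (2 * n) → Bool} (hp : p ∈ dyckSet n) :
    rk p = seqRank n (stepAt p) := by
  rw [rk_eq_seqRank_pred, ((mem_dyckSet_iff p).1 hp).seqRank_pred]

def pathNestAppend (p₁ : Fin (2 * k) → Bool) (p₂ : Fin (2 * (n - 1 - k)) → Bool) :
    Fin (2 * n) → Bool :=
  fun i => nestAppend k (stepAt p₁) (stepAt p₂) i

lemma stepAt_pathNestAppend (hk : k < n) (p₁ : Fin (2 * k) → Bool)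
    (p₂ : Fin (2 * (n - 1 - k)) → Bool) :
    stepAt (pathNestAppend p₁ p₂) = nestAppend k (stepAt p₁) (stepAt p₂) := by
  funext j
  by_cases hj : j < 2 * n
  · rw [stepAt_of_lt _ hj]
    rfl
  obtain ⟨j, rfl⟩ : ∃ j', j = 2 * k + 2 + j' := ⟨j - (2 * k + 2), by omega⟩
  rw [stepAt_of_le _ (by omega), nestAppend_add, stepAt_of_le _ (by omega)]

lemma pathNestAppend_mem_dyckSet (hk : k < n) {p₁ : Fin (2 * k) → Bool}
    {p₂ : Fin (2 * (n - 1 - k)) → Bool} (h₁ : p₁ ∈ dyckSet k) (h₂ : p₂ ∈ dyckSet (n - 1 - k)) :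
    pathNestAppend p₁ p₂ ∈ dyckSet n := by
  have h := isDyckSeq_nestAppend ((mem_dyckSet_iff p₁).1 h₁) ((mem_dyckSet_iff p₂).1 h₂)
  rw [show k + (n - 1 - k) + 1 = n by omega] at h
  rwa [mem_dyckSet_iff, stepAt_pathNestAppend hk]

lemma area_pathNestAppend (hk : k < n) {p₁ : Fin (2 * k) → Bool}
    {p₂ : Fin (2 * (n - 1 - k)) → Bool} (h₁ : p₁ ∈ dyckSet k) (h₂ : p₂ ∈ dyckSet (n - 1 - k)) :
    area (pathNestAppend p₁ p₂) = k + area p₁ + area p₂ := by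
  have h := seqArea_nestAppend ((mem_dyckSet_iff p₁).1 h₁) ((mem_dyckSet_iff p₂).1 h₂)
  rw [show k + (n - 1 - k) + 1 = n by omega] at h
  rw [area_eq_seqArea, area_eq_seqArea, area_eq_seqArea, stepAt_pathNestAppend hk, h]

lemma rk_pathNestAppend_add_rk (hk : k < n) {p₁ : Fin (2 * k) → Bool}
    {p₂ : Fin (2 * (n - 1 - k)) → Bool} (h₁ : p₁ ∈ dyckSet k) (h₂ : p₂ ∈ dyckSet (n - 1 - k)) :
    rk (pathNestAppend p₁ p₂) + rk p₁ = k + rk p₂ := by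
  have h := ((mem_dyckSet_iff p₁).1 h₁).seqRank_nestAppend_add_seqRank (l := n - 1 - k)
    (g := stepAt p₂)
  rw [show k + (n - 1 - k) + 1 = n by omega] at h
  rw [rk_eq_seqRank (pathNestAppend_mem_dyckSet hk h₁ h₂), rk_eq_seqRank h₁, rk_eq_seqRank h₂,
    stepAt_pathNestAppend hk, h]

lemma pathNestAppend_injOn :
    Set.InjOn (fun x : (k : ℕ) × (Fin (2 * k) → Bool) × (Fin (2 * (n - 1 - k)) → Bool) =>
      pathNestAppend x.2.1 x.2.2) ((range n).sigma fun k => dyckSet k ×ˢ dyckSet (n - 1 - k)) := by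
  rintro ⟨k, p₁, p₂⟩ hx ⟨k', p₁', p₂'⟩ hy h
  simp only [coe_sigma, Set.mem_sigma_iff, coe_range, Set.mem_Iio, coe_product, Set.mem_prod,
    mem_coe] at hx hy
  have hs := congrArg stepAt h
  simp only [stepAt_pathNestAppend hx.1, stepAt_pathNestAppend hy.1] at hs
  obtain ⟨rfl, h₁, h₂⟩ :=
    ((mem_dyckSet_iff p₁).1 hx.2.1).nestAppend_inj ((mem_dyckSet_iff p₁').1 hy.2.1) hs
  refine Sigma.ext rfl (heq_of_eq (Prod.ext (funext fun i => ?_) (funext fun i => ?_)))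
  · simpa using h₁ i i.isLt
  · simpa using congrFun h₂ i

lemma exists_pathNestAppend_eq (hn : 0 < n) {p : Fin (2 * n) → Bool} (hp : p ∈ dyckSet n) :
    ∃ k < n, ∃ p₁ ∈ dyckSet k, ∃ p₂ ∈ dyckSet (n - 1 - k), pathNestAppend p₁ p₂ = p := by
  obtain ⟨k, hk, f₁, g₁, hf₁, hg₁, hp⟩ := ((mem_dyckSet_iff p).1 hp).exists_eq_nestAppend hn
  let p₁ : Fin (2 * k) → Bool := fun i => f₁ i
  let p₂ : Fin (2 * (n - 1 - k)) → Bool := fun i => g₁ i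
  have h₁ : ∀ j < 2 * k, stepAt p₁ j = f₁ j := fun j hj => stepAt_of_lt p₁ hj
  have h₂ : ∀ j < 2 * (n - 1 - k), stepAt p₂ j = g₁ j := fun j hj => stepAt_of_lt p₂ hj
  refine ⟨k, hk, p₁, (mem_dyckSet_iff p₁).2 (hf₁.congr fun j hj => (h₁ j hj).symm),
    p₂, (mem_dyckSet_iff p₂).2 (hg₁.congr fun j hj => (h₂ j hj).symm), funext fun i => ?_⟩
  rw [← stepAt_val p i, hp]
  exact nestAppend_congr h₁ h₂ (by omega)

theorem sum_dyckSet_eq_sum_pathNestAppend {M : Type*} [AddCommMonoid M] (hn : 0 < n)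
    (F : (Fin (2 * n) → Bool) → M) :
    ∑ p ∈ dyckSet n, F p = ∑ x ∈ (range n).sigma fun k => dyckSet k ×ˢ dyckSet (n - 1 - k),
      F (pathNestAppend x.2.1 x.2.2) := by
  symm
  refine sum_nbij _ (fun x hx => ?_) pathNestAppend_injOn (fun p hp => ?_) fun _ _ => rfl
  · simp only [mem_sigma, mem_range, mem_product] at hx
    exact pathNestAppend_mem_dyckSet hx.1 hx.2.1 hx.2.2
  · obtain ⟨k, hk, p₁, h₁, p₂, h₂, rfl⟩ := exists_pathNestAppend_eq hn hp
    exact ⟨⟨k, p₁, p₂⟩, by simp [hk, h₁, h₂], rfl⟩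

end Paths

lemma sum_dyckSet_zero {R : Type*} [CommSemiring R] (q t : R) :
    ∑ p ∈ dyckSet 0, q ^ area p * t ^ rk p = 1 := by
  have h : dyckSet 0 = {fun i => i.elim0} := by
    ext p
    simp [dyckSet, IsDyck, upCount, downCount, funext_iff]
  simp [h, area, rk, height, upCount, downCount]

lemma pow_eq_pow_mul_inv_pow_mul_pow {G : Type*} [CommGroupWithZero G] {t : G} (ht : t ≠ 0)
    {r r₁ r₂ k : ℕ} (h : r + r₁ = k + r₂) : t ^ r = t ^ k * t⁻¹ ^ r₁ * t ^ r₂ := by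
  rw [inv_pow, mul_right_comm, eq_mul_inv_iff_mul_eq₀ (pow_ne_zero _ ht), ← pow_add, ← pow_add, h]

/-- Refined Catalan recurrence for the joint area/rank generating polynomial
`D_n(q,t) = ∑_p q^area(p) t^rk(p)`: `D_0(q,t) = 1` and, for `n ≥ 1`,
`D_n(q,t) = ∑_{k=0}^{n-1} (qt)^k D_k(q,1/t) D_{n-1-k}(q,t)`. -/
theorem refined_catalan_recurrence (n : ℕ) (hn : 1 ≤ n) (q t : ℝ) (ht : t ≠ 0) :
    (∑ p ∈ dyckSet 0, q ^ area p * t ^ rk p) = 1 ∧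
    (∑ p ∈ dyckSet n, q ^ area p * t ^ rk p) =
      ∑ k ∈ Finset.range n, (q * t) ^ k *
        (∑ p ∈ dyckSet k, q ^ area p * t⁻¹ ^ rk p) *
        (∑ p ∈ dyckSet (n - 1 - k), q ^ area p * t ^ rk p) := by
  refine ⟨sum_dyckSet_zero q t, ?_⟩
  rw [sum_dyckSet_eq_sum_pathNestAppend hn, sum_sigma]
  refine sum_congr rfl fun k hk => ?_
  simp_rw [mul_assoc, sum_mul_sum, mul_sum, ← sum_product']
  refine sum_congr rfl fun x hx => ?_
  obtain ⟨h₁, h₂⟩ := mem_product.1 hx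
  rw [area_pathNestAppend (mem_range.1 hk) h₁ h₂,
    pow_eq_pow_mul_inv_pow_mul_pow ht (rk_pathNestAppend_add_rk (mem_range.1 hk) h₁ h₂)]
  ring
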